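/- arXiv:2602.20695 — 6 statements merged into one kernel-verified Lean document; each statement's English description precedes it below -/
import Mathlib

section
/- For every δ > 0 and ξ ∈ ℝ, define h(δ, ξ) := 6δ²ξ² ∑_{k=1}^∞ 1/(k²π²(k²π² + δ²ξ²)). Then 0 ≤ h(δ, ξ) ≤ 1, h(δ, ξ) ≤ δ²ξ², and L_δ(ξ) = ξ²(1 − h(δ, ξ)). -/
open Real

noncomputable def Ldelta (δ ξ : ℝ) : ℝ :=
  6 * ξ ^ 2 * ∑' k : ℕ, 1 / (((k : ℝ) + 1) ^ 2 * Real.pi ^ 2 + δ ^ 2 * ξ ^ 2)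

noncomputable def hdelta (δ ξ : ℝ) : ℝ :=
  6 * δ ^ 2 * ξ ^ 2 * ∑' k : ℕ,
    1 / (((k : ℝ) + 1) ^ 2 * Real.pi ^ 2 *
      (((k : ℝ) + 1) ^ 2 * Real.pi ^ 2 + δ ^ 2 * ξ ^ 2))

/-
With `a_k = k²π²`, `b = δ²ξ²` and `S = ∑ 1/(a_k(a_k + b))`, so that `h = 6bS`, the partial fraction
identity `1/(a_k + b) = 1/a_k - b/(a_k(a_k + b))` and `∑ 1/a_k = ζ(2)/π² = 1/6` give
`∑ 1/(a_k + b) = 1/6 - bS`, i.e. `L_δ(ξ) = ξ²(1 - h)`. The left side is nonnegative, hence `h ≤ 1`;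
and `1/(a_k(a_k + b)) ≤ 1/(π² a_k)` gives `h ≤ b/π² ≤ b`.
-/

section PartialFractions

variable {a : ℕ → ℝ} {A b m : ℝ}

lemma one_div_add_eq_sub {x : ℝ} (hx : 0 < x) (hb : 0 ≤ b) :
    1 / (x + b) = 1 / x - b * (1 / (x * (x + b))) := by
  have hxb : 0 < x + b := by positivity
  field_simp
  ring

lemma summable_one_div_mul_add (hm : 0 < m) (ha : ∀ k, m ≤ a k)
    (hA : Summable fun k => 1 / a k) (hb : 0 ≤ b) :
    Summable fun k => 1 / (a k * (a k + b)) := by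
  refine (hA.div_const m).of_nonneg_of_le (fun k => ?_) (fun k => ?_)
  · have := hm.trans_le (ha k)
    positivity
  · have hak := hm.trans_le (ha k)
    rw [div_div, one_div_le_one_div (by positivity) (by positivity)]
    nlinarith [ha k]

lemma hasSum_one_div_add (hm : 0 < m) (ha : ∀ k, m ≤ a k)
    (hA : HasSum (fun k => 1 / a k) A) (hb : 0 ≤ b) :
    HasSum (fun k => 1 / (a k + b)) (A - b * ∑' k, 1 / (a k * (a k + b))) := by
  have hsub := hA.sub ((summable_one_div_mul_add hm ha hA.summable hb).hasSum.mul_left b)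
  simpa only [← one_div_add_eq_sub (hm.trans_le (ha _)) hb] using hsub

lemma mul_tsum_one_div_mul_add_le (hm : 0 < m) (ha : ∀ k, m ≤ a k)
    (hA : HasSum (fun k => 1 / a k) A) (hb : 0 ≤ b) :
    b * ∑' k, 1 / (a k * (a k + b)) ≤ A := by
  have hpos : 0 ≤ A - b * ∑' k, 1 / (a k * (a k + b)) :=
    (hasSum_one_div_add hm ha hA hb).nonneg fun k => by
      have := hm.trans_le (ha k)
      positivity
  linarith

lemma tsum_one_div_mul_add_le (hm : 0 < m) (ha : ∀ k, m ≤ a k)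
    (hA : HasSum (fun k => 1 / a k) A) (hb : 0 ≤ b) :
    ∑' k, 1 / (a k * (a k + b)) ≤ A / m := by
  rw [← hA.tsum_eq, ← tsum_div_const]
  refine (summable_one_div_mul_add hm ha hA.summable hb).tsum_le_tsum (fun k => ?_)
    (hA.summable.div_const m)
  have hak := hm.trans_le (ha k)
  rw [div_div, one_div_le_one_div (by positivity) (by positivity)]
  nlinarith [ha k]

end PartialFractions

lemma hasSum_one_div_succ_sq_mul_pi_sq :
    HasSum (fun k : ℕ => 1 / (((k : ℝ) + 1) ^ 2 * π ^ 2)) (1 / 6) := by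
  have hζ : HasSum (fun k : ℕ => 1 / ((k : ℝ) + 1) ^ 2) (π ^ 2 / 6) := by
    simpa using (hasSum_nat_add_iff' 1).mpr hasSum_zeta_two
  have h := hζ.div_const (π ^ 2)
  rw [div_div_cancel_left' (by positivity), ← one_div] at h
  simpa only [div_div] using h

lemma pi_sq_le_succ_sq_mul_pi_sq (k : ℕ) : π ^ 2 ≤ ((k : ℝ) + 1) ^ 2 * π ^ 2 :=
  le_mul_of_one_le_left (by positivity) (one_le_pow₀ (by linarith [k.cast_nonneg (α := ℝ)]))

theorem hdelta_bounds_and_Ldelta_eq_general (δ : ℝ) (ξ : ℝ) :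
    0 ≤ hdelta δ ξ ∧ hdelta δ ξ ≤ 1 ∧ hdelta δ ξ ≤ δ ^ 2 * ξ ^ 2 ∧
    Ldelta δ ξ = ξ ^ 2 * (1 - hdelta δ ξ) := by
  set a : ℕ → ℝ := fun k => ((k : ℝ) + 1) ^ 2 * π ^ 2
  set b := δ ^ 2 * ξ ^ 2
  set S := ∑' k, 1 / (a k * (a k + b))
  have hb : 0 ≤ b := by positivity
  have hm : 0 < π ^ 2 := by positivity
  have hA := hasSum_one_div_succ_sq_mul_pi_sq
  have hh : hdelta δ ξ = 6 * (b * S) := by simp only [hdelta]; ring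
  have hS : 0 ≤ S := tsum_nonneg fun k => by positivity
  have hbS := mul_tsum_one_div_mul_add_le hm pi_sq_le_succ_sq_mul_pi_sq hA hb
  have hSle := tsum_one_div_mul_add_le hm pi_sq_le_succ_sq_mul_pi_sq hA hb
  refine ⟨by rw [hh]; positivity, by rw [hh]; linarith, ?_, ?_⟩
  · have hπ : 1 / 6 / π ^ 2 ≤ 1 / 6 := div_le_self (by norm_num) (by nlinarith [pi_gt_three])
    rw [hh]
    nlinarith [mul_le_mul_of_nonneg_left (hSle.trans hπ) hb]
  · rw [Ldelta, (hasSum_one_div_add hm pi_sq_le_succ_sq_mul_pi_sq hA hb).tsum_eq, hh]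
    ring

/-- `0 ≤ h(δ,ξ) ≤ 1`, `h(δ,ξ) ≤ δ²ξ²`, and `L_δ(ξ) = ξ²(1 − h(δ,ξ))`. -/
theorem hdelta_bounds_and_Ldelta_eq (δ : ℝ) (hδ : 0 < δ) (ξ : ℝ) :
    0 ≤ hdelta δ ξ ∧ hdelta δ ξ ≤ 1 ∧ hdelta δ ξ ≤ δ ^ 2 * ξ ^ 2 ∧
    Ldelta δ ξ = ξ ^ 2 * (1 - hdelta δ ξ) :=
  hdelta_bounds_and_Ldelta_eq_general δ ξ
end

section
/- For every δ > 0 and all ξ₁, ξ₂ ∈ ℝ, setting ξ := ξ₁ + ξ₂ and ξ₀ := ξ, one has Ξ̃_δ(ξ, ξ₁, ξ₂) = 6ξξ₁ξ₂ ∑_{k=1}^∞ [π²k²(3π²k² + δ²(ξ₁² + ξ₁ξ₂ + ξ₂²))] / [(π²k² + δ²ξ₀²)(π²k² + δ²ξ₁²)(π²k² + δ²ξ₂²)]. -/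
open Real

/-- The dispersion symbol `p̃_δ(ξ) = ξ·L_δ(ξ)` of the scaled ILW. -/
noncomputable def ptilde (δ ξ : ℝ) : ℝ := ξ * Ldelta δ ξ

/-- The resonance function `Ξ̃_δ(ξ, ξ₁, ξ₂) = p̃_δ(ξ) − p̃_δ(ξ₁) − p̃_δ(ξ₂)`. -/
noncomputable def XiTilde (δ ξ ξ₁ ξ₂ : ℝ) : ℝ :=
  ptilde δ ξ - ptilde δ ξ₁ - ptilde δ ξ₂

lemma aux_summable (b : ℝ) (hb : 0 ≤ b) :
    Summable (fun k : ℕ => 1 / (((k : ℝ) + 1) ^ 2 * Real.pi ^ 2 + b)) := by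
  have h : Summable (fun k : ℕ => (1 / Real.pi ^ 2) * (1 / ((k : ℝ) + 1) ^ 2)) := by
    apply Summable.mul_left
    exact_mod_cast (summable_nat_add_iff 1).mpr (Real.summable_one_div_nat_pow.mpr one_lt_two)
  apply h.of_nonneg_of_le
  · intro k; positivity
  · intro k
    rw [one_div, one_div, one_div, ← mul_inv]
    apply inv_anti₀
    · positivity
    · nlinarith [sq_nonneg ((k:ℝ)+1), Real.pi_pos]

/-- Series representation of the resonance function under `ξ = ξ₁ + ξ₂`. -/
theorem XiTilde_series (δ : ℝ) (hδ : 0 < δ) (ξ₁ ξ₂ : ℝ) :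
    XiTilde δ (ξ₁ + ξ₂) ξ₁ ξ₂ =
      6 * (ξ₁ + ξ₂) * ξ₁ * ξ₂ * ∑' k : ℕ,
        (Real.pi ^ 2 * ((k : ℝ) + 1) ^ 2 *
          (3 * Real.pi ^ 2 * ((k : ℝ) + 1) ^ 2 +
            δ ^ 2 * (ξ₁ ^ 2 + ξ₁ * ξ₂ + ξ₂ ^ 2))) /
        ((Real.pi ^ 2 * ((k : ℝ) + 1) ^ 2 + δ ^ 2 * (ξ₁ + ξ₂) ^ 2) *
          (Real.pi ^ 2 * ((k : ℝ) + 1) ^ 2 + δ ^ 2 * ξ₁ ^ 2) *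
          (Real.pi ^ 2 * ((k : ℝ) + 1) ^ 2 + δ ^ 2 * ξ₂ ^ 2)) := by
  have hπ := Real.pi_pos
  have h0 := aux_summable (δ ^ 2 * (ξ₁ + ξ₂) ^ 2) (by positivity)
  have h1 := aux_summable (δ ^ 2 * ξ₁ ^ 2) (by positivity)
  have h2 := aux_summable (δ ^ 2 * ξ₂ ^ 2) (by positivity)
  have e : ∀ x : ℝ, ptilde δ x =
      ∑' k : ℕ, (6 * x ^ 3) * (1 / (((k : ℝ) + 1) ^ 2 * Real.pi ^ 2 + δ ^ 2 * x ^ 2)) := by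
    intro x
    rw [ptilde, Ldelta, tsum_mul_left]; ring
  rw [XiTilde, e, e, e, ← Summable.tsum_sub (h0.mul_left _) (h1.mul_left _),
    ← Summable.tsum_sub ((h0.mul_left _).sub (h1.mul_left _)) (h2.mul_left _), ← tsum_mul_left]
  apply tsum_congr
  intro k
  have hk : (0:ℝ) < ((k : ℝ) + 1) ^ 2 * Real.pi ^ 2 := by positivity
  have d0 : ((k : ℝ) + 1) ^ 2 * Real.pi ^ 2 + δ ^ 2 * (ξ₁ + ξ₂) ^ 2 ≠ 0 := by positivity
  have d1 : ((k : ℝ) + 1) ^ 2 * Real.pi ^ 2 + δ ^ 2 * ξ₁ ^ 2 ≠ 0 := by positivity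
  have d2 : ((k : ℝ) + 1) ^ 2 * Real.pi ^ 2 + δ ^ 2 * ξ₂ ^ 2 ≠ 0 := by positivity
  have d0' : Real.pi ^ 2 * ((k : ℝ) + 1) ^ 2 + δ ^ 2 * (ξ₁ + ξ₂) ^ 2 ≠ 0 := by positivity
  have d1' : Real.pi ^ 2 * ((k : ℝ) + 1) ^ 2 + δ ^ 2 * ξ₁ ^ 2 ≠ 0 := by positivity
  have d2' : Real.pi ^ 2 * ((k : ℝ) + 1) ^ 2 + δ ^ 2 * ξ₂ ^ 2 ≠ 0 := by positivity
  field_simp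
  ring
end

section
/- For every K ≥ 1 there exist constants c, C > 0 such that for every δ ∈ (0, 1] and all ξ₁, ξ₂ ∈ ℝ with ξ := ξ₁ + ξ₂ and max(|ξ|, |ξ₁|, |ξ₂|) ≤ Kδ^{-1}, one has c·|ξξ₁ξ₂| ≤ |Ξ̃_δ(ξ, ξ₁, ξ₂)| ≤ C·|ξξ₁ξ₂|. -/
/-!
Writing `λₖ = (k+1)²π²`, each summand of `p̃_δ` is `6ξ³/(λₖ + δ²ξ²)`, and for `ξ = ξ₁ + ξ₂`
the resonance of a single summand factors exactly as `6ξξ₁ξ₂` times the weight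
`λₖ(3λₖ + δ²(ξ₁² + ξ₁ξ₂ + ξ₂²)) / ((λₖ + δ²ξ²)(λₖ + δ²ξ₁²)(λₖ + δ²ξ₂²))`.
This weight always lies below `3/λₖ`, and when all three frequencies satisfy `δ|x| ≤ K` it lies
above `3/(λₖ(1 + K²/π²)³)`. Summing over `k` with `∑ 1/λₖ = 1/6` (Basel) gives
`3(1 + K²/π²)⁻³ |ξξ₁ξ₂| ≤ |Ξ̃_δ| ≤ 3|ξξ₁ξ₂|`.
-/

open Real

namespace ILW

/-- The Dirichlet eigenvalues of `-d²/dx²` on `[0, 1]`, indexed from `0`. -/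
noncomputable def eigenvalue (k : ℕ) : ℝ := ((k : ℝ) + 1) ^ 2 * π ^ 2

lemma pi_sq_le_eigenvalue (k : ℕ) : π ^ 2 ≤ eigenvalue k :=
  le_mul_of_one_le_left (sq_nonneg π) (one_le_pow₀ (by linarith [k.cast_nonneg (α := ℝ)]))

lemma eigenvalue_pos (k : ℕ) : 0 < eigenvalue k :=
  (pow_pos pi_pos 2).trans_le (pi_sq_le_eigenvalue k)

lemma hasSum_div_eigenvalue (c : ℝ) : HasSum (fun k => c / eigenvalue k) (c / 6) := by
  have basel : HasSum (fun n : ℕ => 1 / ((n : ℝ) + 1) ^ 2) (π ^ 2 / 6) := by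
    simpa using (hasSum_nat_add_iff' 1).2 hasSum_zeta_two
  have hterm : (fun k => c / eigenvalue k) = fun n : ℕ => c / π ^ 2 * (1 / ((n : ℝ) + 1) ^ 2) := by
    ext k
    rw [eigenvalue]
    field_simp
  rw [hterm, show c / 6 = c / π ^ 2 * (π ^ 2 / 6) by field_simp]
  exact basel.mul_left _

lemma summable_div_eigenvalue_add (c : ℝ) {u : ℝ} (hu : 0 ≤ u) :
    Summable fun k => c / (eigenvalue k + u) :=
  (hasSum_div_eigenvalue |c|).summable.of_norm_bounded fun k => by
    rw [norm_div, Real.norm_eq_abs, Real.norm_of_nonneg (by linarith [eigenvalue_pos k])]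
    exact div_le_div_of_nonneg_left (abs_nonneg c) (eigenvalue_pos k) (by linarith)

lemma ptilde_eq_tsum (δ ξ : ℝ) :
    ptilde δ ξ = ∑' k, 6 * ξ ^ 3 / (eigenvalue k + δ ^ 2 * ξ ^ 2) := by
  rw [ptilde, Ldelta, ← tsum_mul_left, ← tsum_mul_left]
  exact tsum_congr fun k => by simp only [eigenvalue]; ring

lemma sq_add_mul_add_sq_nonneg (x y : ℝ) : 0 ≤ x ^ 2 + x * y + y ^ 2 := by
  nlinarith [sq_nonneg (x + y)]

noncomputable def resonanceWeight (b δ ξ₁ ξ₂ : ℝ) : ℝ :=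
  b * (3 * b + δ ^ 2 * (ξ₁ ^ 2 + ξ₁ * ξ₂ + ξ₂ ^ 2)) /
    ((b + δ ^ 2 * (ξ₁ + ξ₂) ^ 2) * (b + δ ^ 2 * ξ₁ ^ 2) * (b + δ ^ 2 * ξ₂ ^ 2))

section resonanceWeight

variable {b : ℝ} (δ ξ₁ ξ₂ : ℝ)

lemma cube_div_resonance_eq (hb : 0 < b) :
    6 * (ξ₁ + ξ₂) ^ 3 / (b + δ ^ 2 * (ξ₁ + ξ₂) ^ 2) - 6 * ξ₁ ^ 3 / (b + δ ^ 2 * ξ₁ ^ 2)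
      - 6 * ξ₂ ^ 3 / (b + δ ^ 2 * ξ₂ ^ 2)
      = 6 * ((ξ₁ + ξ₂) * ξ₁ * ξ₂) * resonanceWeight b δ ξ₁ ξ₂ := by
  have : 0 < b + δ ^ 2 * (ξ₁ + ξ₂) ^ 2 := by positivity
  have : 0 < b + δ ^ 2 * ξ₁ ^ 2 := by positivity
  have : 0 < b + δ ^ 2 * ξ₂ ^ 2 := by positivity
  rw [resonanceWeight]
  field_simp
  ring

lemma resonanceWeight_nonneg (hb : 0 < b) : 0 ≤ resonanceWeight b δ ξ₁ ξ₂ := by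
  have := sq_add_mul_add_sq_nonneg ξ₁ ξ₂
  unfold resonanceWeight
  positivity

lemma resonanceWeight_le (hb : 0 < b) : resonanceWeight b δ ξ₁ ξ₂ ≤ 3 / b := by
  set a₀ := δ ^ 2 * (ξ₁ + ξ₂) ^ 2
  set a₁ := δ ^ 2 * ξ₁ ^ 2
  set a₂ := δ ^ 2 * ξ₂ ^ 2
  have ha₀ : 0 ≤ a₀ := by positivity
  have ha₁ : 0 ≤ a₁ := by positivity
  have ha₂ : 0 ≤ a₂ := by positivity
  -- with `s = a₀ + a₁ + a₂`, the weight is at most `b(3b + s/2)/(b³ + b²s) ≤ 3/b`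
  have hsum : 2 * (δ ^ 2 * (ξ₁ ^ 2 + ξ₁ * ξ₂ + ξ₂ ^ 2)) = a₀ + a₁ + a₂ := by ring
  have hden : b ^ 3 + b ^ 2 * (a₀ + a₁ + a₂) ≤ (b + a₀) * (b + a₁) * (b + a₂) := by
    nlinarith [mul_nonneg ha₀ ha₁, mul_nonneg ha₁ ha₂, mul_nonneg ha₀ ha₂,
      mul_nonneg (mul_nonneg ha₀ ha₁) ha₂]
  rw [resonanceWeight, div_le_div_iff₀ (by positivity) hb]
  nlinarith [mul_nonneg (sq_nonneg b) (add_nonneg (add_nonneg ha₀ ha₁) ha₂)]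

lemma div_le_resonanceWeight {M : ℝ} (hb : 0 < b) (h₀ : δ ^ 2 * (ξ₁ + ξ₂) ^ 2 ≤ M * b)
    (h₁ : δ ^ 2 * ξ₁ ^ 2 ≤ M * b) (h₂ : δ ^ 2 * ξ₂ ^ 2 ≤ M * b) :
    3 / (b * (1 + M) ^ 3) ≤ resonanceWeight b δ ξ₁ ξ₂ := by
  have hM : 0 ≤ M := nonneg_of_mul_nonneg_left ((by positivity : (0 : ℝ) ≤ _).trans h₀) hb
  have hnum : 3 * b ^ 2 ≤ b * (3 * b + δ ^ 2 * (ξ₁ ^ 2 + ξ₁ * ξ₂ + ξ₂ ^ 2)) := by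
    nlinarith [mul_nonneg hb.le (mul_nonneg (sq_nonneg δ) (sq_add_mul_add_sq_nonneg ξ₁ ξ₂))]
  have hden : (b + δ ^ 2 * (ξ₁ + ξ₂) ^ 2) * (b + δ ^ 2 * ξ₁ ^ 2) * (b + δ ^ 2 * ξ₂ ^ 2)
      ≤ (b * (1 + M)) * (b * (1 + M)) * (b * (1 + M)) := by
    gcongr <;> linarith
  rw [resonanceWeight, div_le_div_iff₀ (by positivity) (by positivity)]
  calc 3 * ((b + δ ^ 2 * (ξ₁ + ξ₂) ^ 2) * (b + δ ^ 2 * ξ₁ ^ 2) * (b + δ ^ 2 * ξ₂ ^ 2))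
      ≤ 3 * b ^ 2 * (b * (1 + M) ^ 3) := by nlinarith
    _ ≤ _ := by gcongr

end resonanceWeight

lemma XiTilde_add_eq_mul_tsum (δ ξ₁ ξ₂ : ℝ) :
    XiTilde δ (ξ₁ + ξ₂) ξ₁ ξ₂
      = 6 * ((ξ₁ + ξ₂) * ξ₁ * ξ₂) * ∑' k, resonanceWeight (eigenvalue k) δ ξ₁ ξ₂ := by
  have summable (x : ℝ) := summable_div_eigenvalue_add (6 * x ^ 3) (by positivity : 0 ≤ δ ^ 2 * x ^ 2)
  rw [XiTilde, ptilde_eq_tsum, ptilde_eq_tsum, ptilde_eq_tsum,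
    ← (summable _).tsum_sub (summable _), ← ((summable _).sub (summable _)).tsum_sub (summable _),
    ← tsum_mul_left]
  exact tsum_congr fun k => cube_div_resonance_eq δ ξ₁ ξ₂ (eigenvalue_pos k)

section tsum

variable {δ ξ₁ ξ₂ : ℝ}

lemma summable_resonanceWeight : Summable fun k => resonanceWeight (eigenvalue k) δ ξ₁ ξ₂ :=
  (hasSum_div_eigenvalue 3).summable.of_nonneg_of_le
    (fun k => resonanceWeight_nonneg δ ξ₁ ξ₂ (eigenvalue_pos k))
    (fun k => resonanceWeight_le δ ξ₁ ξ₂ (eigenvalue_pos k))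

lemma tsum_resonanceWeight_nonneg : 0 ≤ ∑' k, resonanceWeight (eigenvalue k) δ ξ₁ ξ₂ :=
  tsum_nonneg fun k => resonanceWeight_nonneg δ ξ₁ ξ₂ (eigenvalue_pos k)

lemma tsum_resonanceWeight_le : ∑' k, resonanceWeight (eigenvalue k) δ ξ₁ ξ₂ ≤ 1 / 2 :=
  (hasSum_le (fun k => resonanceWeight_le δ ξ₁ ξ₂ (eigenvalue_pos k))
    summable_resonanceWeight.hasSum (hasSum_div_eigenvalue 3)).trans_eq (by norm_num)

lemma div_le_tsum_resonanceWeight {K : ℝ} (h₀ : δ ^ 2 * (ξ₁ + ξ₂) ^ 2 ≤ K ^ 2)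
    (h₁ : δ ^ 2 * ξ₁ ^ 2 ≤ K ^ 2) (h₂ : δ ^ 2 * ξ₂ ^ 2 ≤ K ^ 2) :
    1 / (2 * (1 + K ^ 2 / π ^ 2) ^ 3) ≤ ∑' k, resonanceWeight (eigenvalue k) δ ξ₁ ξ₂ := by
  have hK (k : ℕ) : K ^ 2 ≤ K ^ 2 / π ^ 2 * eigenvalue k := by
    rw [div_mul_eq_mul_div, le_div_iff₀ (by positivity)]
    exact mul_le_mul_of_nonneg_left (pi_sq_le_eigenvalue k) (sq_nonneg K)
  have hweight (k : ℕ) : 3 / (1 + K ^ 2 / π ^ 2) ^ 3 / eigenvalue k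
      ≤ resonanceWeight (eigenvalue k) δ ξ₁ ξ₂ := by
    rw [div_div, mul_comm]
    exact div_le_resonanceWeight δ ξ₁ ξ₂ (eigenvalue_pos k)
      (h₀.trans (hK k)) (h₁.trans (hK k)) (h₂.trans (hK k))
  calc 1 / (2 * (1 + K ^ 2 / π ^ 2) ^ 3)
      _ = 3 / (1 + K ^ 2 / π ^ 2) ^ 3 / 6 := by field_simp; norm_num
      _ ≤ _ := hasSum_le hweight (hasSum_div_eigenvalue _) summable_resonanceWeight.hasSum

end tsum

lemma sq_mul_sq_le_sq_of_abs_le_mul_inv {δ x K : ℝ} (hδ : 0 < δ) (hx : |x| ≤ K * δ⁻¹) :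
    δ ^ 2 * x ^ 2 ≤ K ^ 2 := by
  have hδx : δ * |x| ≤ K := by rwa [le_mul_inv_iff₀ hδ, mul_comm] at hx
  calc δ ^ 2 * x ^ 2 = (δ * |x|) ^ 2 := by rw [mul_pow, sq_abs]
    _ ≤ K ^ 2 := pow_le_pow_left₀ (by positivity) hδx 2

end ILW

theorem XiTilde_comparable_KdV_low_freq_general (K : ℝ) :
    ∃ c > 0, ∃ C > 0, ∀ δ ∈ Set.Ioc (0 : ℝ) 1, ∀ ξ₁ ξ₂ : ℝ,
      max |ξ₁ + ξ₂| (max |ξ₁| |ξ₂|) ≤ K * δ⁻¹ →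
      c * |(ξ₁ + ξ₂) * ξ₁ * ξ₂| ≤ |XiTilde δ (ξ₁ + ξ₂) ξ₁ ξ₂| ∧
      |XiTilde δ (ξ₁ + ξ₂) ξ₁ ξ₂| ≤ C * |(ξ₁ + ξ₂) * ξ₁ * ξ₂| := by
  refine ⟨3 / (1 + K ^ 2 / π ^ 2) ^ 3, by positivity, 3, three_pos,
    fun δ hδ ξ₁ ξ₂ hfreq => ?_⟩
  simp only [max_le_iff] at hfreq
  obtain ⟨h₀, h₁, h₂⟩ := hfreq
  have hbound {x : ℝ} (hx : |x| ≤ K * δ⁻¹) := ILW.sq_mul_sq_le_sq_of_abs_le_mul_inv hδ.1 hx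
  set S := ∑' k, ILW.resonanceWeight (ILW.eigenvalue k) δ ξ₁ ξ₂
  set A := |(ξ₁ + ξ₂) * ξ₁ * ξ₂|
  have hXi : |XiTilde δ (ξ₁ + ξ₂) ξ₁ ξ₂| = 6 * A * S := by
    rw [ILW.XiTilde_add_eq_mul_tsum, abs_mul, abs_mul, abs_of_pos (by norm_num : (0 : ℝ) < 6),
      abs_of_nonneg ILW.tsum_resonanceWeight_nonneg]
  rw [hXi]
  constructor
  · calc 3 / (1 + K ^ 2 / π ^ 2) ^ 3 * A = 6 * A * (1 / (2 * (1 + K ^ 2 / π ^ 2) ^ 3)) := by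
          field_simp
          ring
      _ ≤ 6 * A * S := by
          gcongr
          exact ILW.div_le_tsum_resonanceWeight (hbound h₀) (hbound h₁) (hbound h₂)
  · calc 6 * A * S ≤ 6 * A * (1 / 2) := by gcongr; exact ILW.tsum_resonanceWeight_le
      _ = 3 * A := by ring

/-- For frequencies of size at most `Kδ⁻¹`, `|Ξ̃_δ|` is comparable to the KdV
resonance function `|ξξ₁ξ₂|`, uniformly in `δ ∈ (0,1]`. -/
theorem XiTilde_comparable_KdV_low_freq (K : ℝ) (hK : 1 ≤ K) :
    ∃ c > 0, ∃ C > 0, ∀ δ ∈ Set.Ioc (0 : ℝ) 1, ∀ ξ₁ ξ₂ : ℝ,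
      max |ξ₁ + ξ₂| (max |ξ₁| |ξ₂|) ≤ K * δ⁻¹ →
      c * |(ξ₁ + ξ₂) * ξ₁ * ξ₂| ≤ |XiTilde δ (ξ₁ + ξ₂) ξ₁ ξ₂| ∧
      |XiTilde δ (ξ₁ + ξ₂) ξ₁ ξ₂| ≤ C * |(ξ₁ + ξ₂) * ξ₁ * ξ₂| :=
  XiTilde_comparable_KdV_low_freq_general K
end

section
/- There exist constants K ≥ 1 and c, C > 0 such that for every δ ∈ (0, 1] and all ξ₁, ξ₂ ∈ ℝ with ξ := ξ₁ + ξ₂, if ξ_max ≥ Kδ^{-1}, then c·δ^{-1}·ξ_min·ξ_max ≤ |Ξ̃_δ(ξ, ξ₁, ξ₂)| ≤ C·δ^{-1}·ξ_min·ξ_max, where ξ_max and ξ_min denote the largest and the smallest of |ξ|, |ξ₁|, |ξ₂|. -/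
open Real

/-!
Since `p̃_δ(ξ) = δ⁻³ p̃₁(δξ)` it suffices to take `δ = 1`, and since `p̃₁` is odd, up to order and
sign the three frequencies are `a`, `b`, `a + b` with `a, b ≥ 0`. With `A = k²π²` and
`g(x) = x³/(A + x²)`, the defect `g(a + b) - g(a) - g(b)` is an explicit positive rational function
lying between `ab(a + b)·A/(A + (a + b)²)²` and `3ab(a + b)/(A + (a + b)²)`. Comparison with
telescoping series gives `∑ₖ 1/(k²π² + x²) ≤ 2/(πx)` and, for `x ≥ π`,
`∑ₖ k²π²/(k²π² + x²)² ≥ 1/(8πx)`, so `Ξ̃₁(a + b, a, b)` is comparable to `ab`, which is comparable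
to `min(a, b)·(a + b)`.
-/

open Filter Topology

section minMax

variable {a b : ℝ}

lemma min_mul_add_le_two_mul (ha : 0 ≤ a) (hb : 0 ≤ b) : min a b * (a + b) ≤ 2 * (a * b) := by
  rcases le_total a b with h | h
  · rw [min_eq_left h]; nlinarith
  · rw [min_eq_right h]; nlinarith

lemma mul_le_min_mul_add (ha : 0 ≤ a) (hb : 0 ≤ b) : a * b ≤ min a b * (a + b) := by
  rcases le_total a b with h | h
  · rw [min_eq_left h]; nlinarith
  · rw [min_eq_right h]; nlinarith

end minMax

lemma hasSum_sub_succ_of_antitone {φ : ℕ → ℝ} (hφ : Antitone φ)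
    (hlim : Tendsto φ atTop (𝓝 0)) : HasSum (fun n ↦ φ n - φ (n + 1)) (φ 0) := by
  rw [hasSum_iff_tendsto_nat_of_nonneg fun n ↦ sub_nonneg.2 (hφ n.le_succ)]
  simp_rw [Finset.sum_range_sub']
  simpa using tendsto_const_nhds.sub hlim

-- `(k + 1)πi`, `k : ℕ`, are the poles of `coth` in the upper half-plane.
noncomputable def poleSq (k : ℕ) : ℝ := ((k : ℝ) + 1) ^ 2 * π ^ 2

lemma poleSq_pos (k : ℕ) : 0 < poleSq k := by unfold poleSq; positivity

lemma summable_one_div_poleSq_add {y : ℝ} (hy : 0 ≤ y) :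
    Summable fun k ↦ 1 / (poleSq k + y) := by
  have h := (summable_nat_add_iff 1).mpr (Real.summable_one_div_nat_pow.mpr one_lt_two)
  refine Summable.of_nonneg_of_le (fun k ↦ by have := poleSq_pos k; positivity) (fun k ↦ ?_)
    (h.mul_left (1 / π ^ 2))
  have := poleSq_pos k
  calc 1 / (poleSq k + y) ≤ 1 / poleSq k := one_div_le_one_div_of_le this (by linarith)
    _ = 1 / π ^ 2 * (1 / ((k + 1 : ℕ) : ℝ) ^ 2) := by
      unfold poleSq; push_cast; field_simp

lemma tsum_one_div_poleSq_add_sq_le {x : ℝ} (hx : 0 < x) :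
    ∑' k, 1 / (poleSq k + x ^ 2) ≤ 2 / (π * x) := by
  set φ : ℕ → ℝ := fun n ↦ 2 / (π * (π * n + x))
  have hφ : Antitone φ := fun m n hmn ↦ by
    have : (m : ℝ) ≤ n := by exact_mod_cast hmn
    simp only [φ]; gcongr
  have hlim : Tendsto φ atTop (𝓝 0) :=
    tendsto_const_nhds.div_atTop <| (tendsto_atTop_add_const_right _ x
      (tendsto_natCast_atTop_atTop.const_mul_atTop pi_pos)).const_mul_atTop pi_pos
  have hle : ∀ n, 1 / (poleSq n + x ^ 2) ≤ φ n - φ (n + 1) := fun n ↦ by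
    have ht : 0 < π * n + x := by positivity
    simp only [φ, poleSq]
    rw [div_sub_div _ _ (by positivity) (by positivity),
      div_le_div_iff₀ (by positivity) (by positivity)]
    push_cast
    nlinarith [pi_pos, sq_nonneg (π * (n + 1) - x), mul_pos pi_pos ht]
  simpa [φ] using hasSum_le hle (summable_one_div_poleSq_add (sq_nonneg x)).hasSum
    (hasSum_sub_succ_of_antitone hφ hlim)

lemma summable_poleSq_div_poleSq_add_sq_sq (x : ℝ) :
    Summable fun k ↦ poleSq k / (poleSq k + x ^ 2) ^ 2 :=
  (summable_one_div_poleSq_add (sq_nonneg x)).of_nonneg_of_le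
    (fun k ↦ by have := poleSq_pos k; positivity) fun k ↦ by
      have := poleSq_pos k
      rw [div_le_div_iff₀ (by positivity) (by positivity)]
      nlinarith [sq_nonneg x]

lemma le_tsum_poleSq_div_poleSq_add_sq_sq {x : ℝ} (hx : π ≤ x) :
    1 / (8 * π * x) ≤ ∑' k, poleSq k / (poleSq k + x ^ 2) ^ 2 := by
  have hx0 : 0 < x := pi_pos.trans_le hx
  -- `φ` stays constant while `πn ≤ x`, where the terms are too small to pay for a decrease.
  set φ : ℕ → ℝ := fun n ↦ 1 / (8 * π * max (π * n) x)
  have hφ : Antitone φ := fun m n hmn ↦ by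
    have : (m : ℝ) ≤ n := by exact_mod_cast hmn
    simp only [φ]; gcongr
  have hlim : Tendsto φ atTop (𝓝 0) :=
    tendsto_const_nhds.div_atTop <| Tendsto.const_mul_atTop (by positivity) <|
      tendsto_atTop_mono (fun _ ↦ le_max_left _ _)
        (tendsto_natCast_atTop_atTop.const_mul_atTop pi_pos)
  have hle : ∀ n, φ n - φ (n + 1) ≤ poleSq n / (poleSq n + x ^ 2) ^ 2 := fun n ↦ by
    set t := π * ((n : ℝ) + 1)
    have hpole : poleSq n = t ^ 2 := by simp only [poleSq, t]; ring
    simp only [φ, Nat.cast_succ, hpole]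
    rcases le_or_gt t x with htx | hxt
    · rw [max_eq_right (by nlinarith [pi_pos] : π * n ≤ x), max_eq_right htx, sub_self]
      positivity
    set M := max (π * n) x
    have hM : t ≤ M + π := by nlinarith [le_max_left (π * n) x]
    have hMx : x ≤ M := le_max_right _ _
    have hMt : M ≤ t := max_le (by nlinarith [pi_pos]) hxt.le
    rw [max_eq_left hxt.le]
    calc 1 / (8 * π * M) - 1 / (8 * π * t) ≤ 1 / (4 * t ^ 2) := by
          rw [div_sub_div _ _ (by positivity) (by positivity),
            div_le_div_iff₀ (by positivity) (by positivity)]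
          have ht : 0 < t := by positivity
          nlinarith [mul_le_mul_of_nonneg_left (by linarith : t - M ≤ π)
              (by positivity : 0 ≤ 32 * π * t ^ 2),
            mul_le_mul_of_nonneg_left (by linarith : t ≤ 2 * M)
              (by positivity : 0 ≤ 32 * π ^ 2 * t)]
      _ ≤ t ^ 2 / (t ^ 2 + x ^ 2) ^ 2 := by
          rw [div_le_div_iff₀ (by positivity) (by positivity)]
          nlinarith [mul_le_mul hxt.le hxt.le hx0.le (by linarith)]
  simpa [φ, hx0.le] using hasSum_le hle (hasSum_sub_succ_of_antitone hφ hlim)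
    (summable_poleSq_div_poleSq_add_sq_sq x).hasSum

section cubeDiv

variable {A a b : ℝ}

noncomputable def cubeDiv (A x : ℝ) : ℝ := x ^ 3 / (A + x ^ 2)

lemma cubeDiv_add_sub_sub_eq (hA : 0 < A) :
    cubeDiv A (a + b) - cubeDiv A a - cubeDiv A b =
      a * b * A * ((2 * a + b) / ((A + a ^ 2) * (A + (a + b) ^ 2)) +
        (a + 2 * b) / ((A + b ^ 2) * (A + (a + b) ^ 2))) := by
  have : 0 < A + a ^ 2 := by positivity
  have : 0 < A + b ^ 2 := by positivity
  have : 0 < A + (a + b) ^ 2 := by positivity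
  unfold cubeDiv
  field_simp
  ring

lemma cubeDiv_add_sub_sub_le (hA : 0 < A) (ha : 0 ≤ a) (hb : 0 ≤ b) :
    cubeDiv A (a + b) - cubeDiv A a - cubeDiv A b ≤ 3 * a * b * (a + b) / (A + (a + b) ^ 2) := by
  rw [cubeDiv_add_sub_sub_eq hA]
  have hs : 0 < A + (a + b) ^ 2 := by positivity
  have key : ∀ c : ℝ, A * (1 / ((A + c ^ 2) * (A + (a + b) ^ 2))) ≤ 1 / (A + (a + b) ^ 2) :=
    fun c ↦ by
      rw [mul_one_div, div_le_div_iff₀ (by positivity) hs]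
      nlinarith [sq_nonneg c, mul_nonneg hA.le (sq_nonneg c)]
  have h1 := mul_le_mul_of_nonneg_left (key a) (by positivity : 0 ≤ a * b * (2 * a + b))
  have h2 := mul_le_mul_of_nonneg_left (key b) (by positivity : 0 ≤ a * b * (a + 2 * b))
  calc _ = a * b * (2 * a + b) * (A * (1 / ((A + a ^ 2) * (A + (a + b) ^ 2)))) +
        a * b * (a + 2 * b) * (A * (1 / ((A + b ^ 2) * (A + (a + b) ^ 2)))) := by ring
    _ ≤ a * b * (2 * a + b) * (1 / (A + (a + b) ^ 2)) +
        a * b * (a + 2 * b) * (1 / (A + (a + b) ^ 2)) := add_le_add h1 h2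
    _ = _ := by ring

lemma le_cubeDiv_add_sub_sub (hA : 0 < A) (ha : 0 ≤ a) (hb : 0 ≤ b) :
    a * b * (a + b) * A / (A + (a + b) ^ 2) ^ 2 ≤
      cubeDiv A (a + b) - cubeDiv A a - cubeDiv A b := by
  rw [cubeDiv_add_sub_sub_eq hA]
  have hfirst : (a + b) / (A + (a + b) ^ 2) ^ 2 ≤ (2 * a + b) / ((A + a ^ 2) * (A + (a + b) ^ 2)) :=
    div_le_div₀ (by positivity) (by linarith) (by positivity)
      (by rw [sq (A + (a + b) ^ 2)]; gcongr; nlinarith)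
  have hsecond : 0 ≤ (a + 2 * b) / ((A + b ^ 2) * (A + (a + b) ^ 2)) := by positivity
  calc _ = a * b * A * ((a + b) / (A + (a + b) ^ 2) ^ 2) := by ring
    _ ≤ _ := mul_le_mul_of_nonneg_left (by linarith) (by positivity)

end cubeDiv

lemma ptilde_neg (δ ξ : ℝ) : ptilde δ (-ξ) = -ptilde δ ξ := by
  simp only [ptilde, Ldelta, neg_sq]; ring

lemma ptilde_eq_inv_pow_mul_ptilde_one {δ : ℝ} (hδ : δ ≠ 0) (ξ : ℝ) :
    ptilde δ ξ = δ⁻¹ ^ 3 * ptilde 1 (δ * ξ) := by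
  simp only [ptilde, Ldelta, one_pow, one_mul, mul_pow]
  generalize (∑' k : ℕ, 1 / (((k : ℝ) + 1) ^ 2 * π ^ 2 + δ ^ 2 * ξ ^ 2)) = S
  field_simp

lemma XiTilde_eq_inv_pow_mul_XiTilde_one {δ : ℝ} (hδ : δ ≠ 0) (a b : ℝ) :
    XiTilde δ (a + b) a b = δ⁻¹ ^ 3 * XiTilde 1 (δ * a + δ * b) (δ * a) (δ * b) := by
  simp only [XiTilde, ptilde_eq_inv_pow_mul_ptilde_one hδ, mul_add]
  ring

lemma summable_cubeDiv_poleSq (x : ℝ) : Summable fun k ↦ cubeDiv (poleSq k) x := by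
  simpa only [cubeDiv, mul_one_div] using
    (summable_one_div_poleSq_add (sq_nonneg x)).mul_left (x ^ 3)

lemma summable_cubeDiv_defect (a b : ℝ) : Summable fun k ↦
    6 * (cubeDiv (poleSq k) (a + b) - cubeDiv (poleSq k) a - cubeDiv (poleSq k) b) :=
  (((summable_cubeDiv_poleSq _).sub (summable_cubeDiv_poleSq a)).sub
    (summable_cubeDiv_poleSq b)).mul_left 6

lemma ptilde_one_eq_tsum (x : ℝ) : ptilde 1 x = ∑' k, 6 * cubeDiv (poleSq k) x := by
  simp only [ptilde, Ldelta, cubeDiv, poleSq, one_pow, one_mul]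
  rw [← mul_assoc, ← tsum_mul_left]
  exact tsum_congr fun k ↦ by ring

lemma XiTilde_one_eq_tsum (a b : ℝ) :
    XiTilde 1 (a + b) a b =
      ∑' k, 6 * (cubeDiv (poleSq k) (a + b) - cubeDiv (poleSq k) a - cubeDiv (poleSq k) b) := by
  have hs := fun x ↦ (summable_cubeDiv_poleSq x).mul_left 6
  rw [XiTilde, ptilde_one_eq_tsum, ptilde_one_eq_tsum, ptilde_one_eq_tsum,
    ← (hs _).tsum_sub (hs a), ← ((hs _).sub (hs a)).tsum_sub (hs b)]
  simp only [mul_sub]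

section resonance

variable {a b : ℝ}

lemma XiTilde_one_le (ha : 0 ≤ a) (hb : 0 ≤ b) (hs : 0 < a + b) :
    XiTilde 1 (a + b) a b ≤ 36 / π * (a * b) := by
  have hS := (summable_one_div_poleSq_add (sq_nonneg (a + b))).mul_left (18 * a * b * (a + b))
  calc XiTilde 1 (a + b) a b
      ≤ ∑' k, 18 * a * b * (a + b) * (1 / (poleSq k + (a + b) ^ 2)) := by
        rw [XiTilde_one_eq_tsum]
        refine (summable_cubeDiv_defect a b).tsum_le_tsum (fun k ↦ ?_) hS
        rw [mul_one_div]
        linear_combination 6 * cubeDiv_add_sub_sub_le (poleSq_pos k) ha hb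
    _ = 18 * a * b * (a + b) * ∑' k, 1 / (poleSq k + (a + b) ^ 2) := tsum_mul_left
    _ ≤ 18 * a * b * (a + b) * (2 / (π * (a + b))) := by
        gcongr
        exact tsum_one_div_poleSq_add_sq_le hs
    _ = 36 / π * (a * b) := by field_simp; ring

lemma le_XiTilde_one (ha : 0 ≤ a) (hb : 0 ≤ b) (hs : π ≤ a + b) :
    3 / (4 * π) * (a * b) ≤ XiTilde 1 (a + b) a b := by
  have hs0 : 0 < a + b := pi_pos.trans_le hs
  have hT := (summable_poleSq_div_poleSq_add_sq_sq (a + b)).mul_left (6 * a * b * (a + b))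
  calc 3 / (4 * π) * (a * b) = 6 * a * b * (a + b) * (1 / (8 * π * (a + b))) := by
        field_simp; ring
    _ ≤ 6 * a * b * (a + b) * ∑' k, poleSq k / (poleSq k + (a + b) ^ 2) ^ 2 := by
        gcongr
        exact le_tsum_poleSq_div_poleSq_add_sq_sq hs
    _ = ∑' k, 6 * a * b * (a + b) * (poleSq k / (poleSq k + (a + b) ^ 2) ^ 2) :=
        tsum_mul_left.symm
    _ ≤ XiTilde 1 (a + b) a b := by
        rw [XiTilde_one_eq_tsum]
        refine hT.tsum_le_tsum (fun k ↦ ?_) (summable_cubeDiv_defect a b)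
        rw [← mul_div_assoc]
        linear_combination 6 * le_cubeDiv_add_sub_sub (poleSq_pos k) ha hb

lemma XiTilde_bounds {δ : ℝ} (hδ : 0 < δ) (ha : 0 ≤ a) (hb : 0 ≤ b) (hs : π ≤ δ * (a + b)) :
    3 / (8 * π) * δ⁻¹ * min a b * (a + b) ≤ XiTilde δ (a + b) a b ∧
      XiTilde δ (a + b) a b ≤ 36 / π * δ⁻¹ * min a b * (a + b) := by
  have hδa : 0 ≤ δ * a := by positivity
  have hδb : 0 ≤ δ * b := by positivity
  have hscale : ∀ c : ℝ, δ⁻¹ ^ 3 * (c * (δ * a * (δ * b))) = c * δ⁻¹ * (a * b) := fun c ↦ by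
    field_simp
  rw [XiTilde_eq_inv_pow_mul_XiTilde_one hδ.ne']
  constructor
  · calc 3 / (8 * π) * δ⁻¹ * min a b * (a + b)
          = 3 / (8 * π) * δ⁻¹ * (min a b * (a + b)) := by ring
      _ ≤ 3 / (8 * π) * δ⁻¹ * (2 * (a * b)) := 
          mul_le_mul_of_nonneg_left (min_mul_add_le_two_mul ha hb) (by positivity)
      _ = δ⁻¹ ^ 3 * (3 / (4 * π) * (δ * a * (δ * b))) := by rw [hscale]; ring
      _ ≤ _ := by gcongr; exact le_XiTilde_one hδa hδb (by linarith)
  · calc _ ≤ δ⁻¹ ^ 3 * (36 / π * (δ * a * (δ * b))) := by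
          gcongr; exact XiTilde_one_le hδa hδb (by nlinarith [pi_pos])
      _ = 36 / π * δ⁻¹ * (a * b) := hscale _
      _ ≤ 36 / π * δ⁻¹ * (min a b * (a + b)) := 
          mul_le_mul_of_nonneg_left (mul_le_min_mul_add ha hb) (by positivity)
      _ = 36 / π * δ⁻¹ * min a b * (a + b) := by ring

end resonance

lemma exists_nonneg_abs_XiTilde_eq (δ u v : ℝ) : ∃ a b : ℝ, 0 ≤ a ∧ 0 ≤ b ∧
    |XiTilde δ (u + v) u v| = |XiTilde δ (a + b) a b| ∧
    min |u + v| (min |u| |v|) = min a b ∧ max |u + v| (max |u| |v|) = a + b := by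
  rcases le_total 0 u with hu | hu <;> rcases le_total 0 v with hv | hv
  · refine ⟨u, v, hu, hv, rfl, ?_, ?_⟩ <;>
      rw [abs_of_nonneg hu, abs_of_nonneg hv, abs_of_nonneg (by linarith)] <;> grind
  · rcases le_total 0 (u + v) with huv | huv
    · refine ⟨u + v, -v, huv, by linarith, ?_, ?_, ?_⟩
      · rw [abs_eq_abs, show u + v + -v = u by ring]
        right; simp only [XiTilde, ptilde_neg]; ring
      all_goals rw [abs_of_nonneg hu, abs_of_nonpos hv, abs_of_nonneg huv]; grind
    · refine ⟨u, -(u + v), hu, by linarith, ?_, ?_, ?_⟩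
      · rw [abs_eq_abs, show u + -(u + v) = -v by ring]
        left; simp only [XiTilde, ptilde_neg]; ring
      all_goals rw [abs_of_nonneg hu, abs_of_nonpos hv, abs_of_nonpos huv]; grind
  · rcases le_total 0 (u + v) with huv | huv
    · refine ⟨-u, u + v, by linarith, huv, ?_, ?_, ?_⟩
      · rw [abs_eq_abs, show -u + (u + v) = v by ring]
        right; simp only [XiTilde, ptilde_neg]; ring
      all_goals rw [abs_of_nonpos hu, abs_of_nonneg hv, abs_of_nonneg huv]; grind
    · refine ⟨-(u + v), v, by linarith, hv, ?_, ?_, ?_⟩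
      · rw [abs_eq_abs, show -(u + v) + v = -u by ring]
        left; simp only [XiTilde, ptilde_neg]; ring
      all_goals rw [abs_of_nonpos hu, abs_of_nonneg hv, abs_of_nonpos huv]; grind
  · refine ⟨-u, -v, by linarith, by linarith, ?_, ?_, ?_⟩
    · rw [abs_eq_abs, show -u + -v = -(u + v) by ring]
      right; simp only [XiTilde, ptilde_neg]; ring
    all_goals rw [abs_of_nonpos hu, abs_of_nonpos hv, abs_of_nonpos (by linarith)]; grind

/-- If the largest frequency is at least `Kδ⁻¹`, then `|Ξ̃_δ| ∼ δ⁻¹·ξ_min·ξ_max`,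
uniformly in `δ ∈ (0,1]`. -/
theorem XiTilde_comparable_BO_high_freq :
    ∃ K : ℝ, 1 ≤ K ∧ ∃ c > 0, ∃ C > 0, ∀ δ ∈ Set.Ioc (0 : ℝ) 1, ∀ ξ₁ ξ₂ : ℝ,
      K * δ⁻¹ ≤ max |ξ₁ + ξ₂| (max |ξ₁| |ξ₂|) →
      c * δ⁻¹ * min |ξ₁ + ξ₂| (min |ξ₁| |ξ₂|) * max |ξ₁ + ξ₂| (max |ξ₁| |ξ₂|)
          ≤ |XiTilde δ (ξ₁ + ξ₂) ξ₁ ξ₂| ∧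
      |XiTilde δ (ξ₁ + ξ₂) ξ₁ ξ₂|
          ≤ C * δ⁻¹ * min |ξ₁ + ξ₂| (min |ξ₁| |ξ₂|) * max |ξ₁ + ξ₂| (max |ξ₁| |ξ₂|) := by
  refine ⟨π, by linarith [pi_gt_three], 3 / (8 * π), by positivity, 36 / π, by positivity, ?_⟩
  rintro δ ⟨hδ, -⟩ ξ₁ ξ₂ hK
  obtain ⟨a, b, ha, hb, hXi, hmin, hmax⟩ := exists_nonneg_abs_XiTilde_eq δ ξ₁ ξ₂
  rw [hmax, ← div_eq_mul_inv, div_le_iff₀ hδ] at hK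
  obtain ⟨hlower, hupper⟩ := XiTilde_bounds hδ ha hb (by linarith)
  rw [hXi, hmin, hmax, abs_of_nonneg (le_trans (by positivity) hlower)]
  exact ⟨hlower, hupper⟩
end

section
/- There exist constants c, C > 0 such that for every δ ∈ (0, 1] and all ξ, ξ₁ ∈ ℝ with |ξ| ≤ δ^{-1}, |ξ₁| ≤ δ^{-1}, and |ξ − ξ₁| ≤ δ^{-1}, the function μ(η) := Ξ̃_δ(ξ, η, ξ − η) is differentiable at η = ξ₁, and its derivative satisfies c·(ξ(ξ − 2ξ₁))² ≤ μ'(ξ₁)·ξ(ξ − 2ξ₁) and |μ'(ξ₁)| ≤ C·|ξ(ξ − 2ξ₁)|; in particular μ'(ξ₁) has the same sign as ξ(ξ − 2ξ₁) and |μ'(ξ₁)| is comparable to |ξ(ξ − 2ξ₁)| uniformly in δ. -/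
open Real

/-! With `Aₖ = (k+1)²π²` one has `p̃_δ(y) = 6 ∑ₖ y³/(Aₖ + δ²y²)`, so the derivative of
`η ↦ Ξ̃_δ(ξ, η, ξ - η)` at `ξ₁` is `6 ∑ₖ (gₖ(ξ - ξ₁) - gₖ(ξ₁))` with
`gₖ(y) = y²(3Aₖ + δ²y²)/(Aₖ + δ²y²)²`. Each `gₖ` is a rational function of `y²`, so the difference
factors as `((ξ - ξ₁)² - ξ₁²) Qₖ = ξ(ξ - 2ξ₁) Qₖ`. When `δ²ξ₁², δ²(ξ - ξ₁)² ≤ 1 ≤ Aₖ`, which is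
what the frequency restriction gives, `3/(16Aₖ) ≤ Qₖ ≤ 5/Aₖ`; summing with `∑ 1/Aₖ = 1/6` bounds
`∑ Qₖ` above and below independently of `δ`. -/

noncomputable def ilwTerm (A a y : ℝ) : ℝ := y ^ 3 / (A + a * y ^ 2)

noncomputable def ilwTermDeriv (A a y : ℝ) : ℝ :=
  y ^ 2 * (3 * A + a * y ^ 2) / (A + a * y ^ 2) ^ 2

noncomputable def secantFactor (A u v : ℝ) : ℝ :=
  A * (3 * A ^ 2 + A * (u + v) - u * v) / ((A + u) ^ 2 * (A + v) ^ 2)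

section Term

variable {A a : ℝ}

theorem hasDerivAt_ilwTerm (hA : 0 < A) (ha : 0 ≤ a) (y : ℝ) :
    HasDerivAt (ilwTerm A a) (ilwTermDeriv A a y) y := by
  have hden : A + a * y ^ 2 ≠ 0 := by positivity
  refine ((hasDerivAt_pow 3 y).div
    (((hasDerivAt_pow 2 y).const_mul a).const_add A) hden).congr_deriv ?_
  unfold ilwTermDeriv
  field_simp
  push_cast
  ring

theorem ilwTermDeriv_nonneg (hA : 0 < A) (ha : 0 ≤ a) (y : ℝ) : 0 ≤ ilwTermDeriv A a y := by
  unfold ilwTermDeriv; positivity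

theorem ilwTermDeriv_le (hA : 0 < A) (ha : 0 ≤ a) (y : ℝ) :
    ilwTermDeriv A a y ≤ 3 * y ^ 2 / A := by
  have ht : 0 ≤ a * y ^ 2 := by positivity
  unfold ilwTermDeriv
  rw [div_le_div_iff₀ (by positivity) hA]
  nlinarith [mul_nonneg (sq_nonneg y) (mul_nonneg ht (by positivity : 0 ≤ 5 * A + 3 * (a * y ^ 2)))]

theorem ilwTermDeriv_sub (hA : 0 < A) (ha : 0 ≤ a) (z w : ℝ) :
    ilwTermDeriv A a w - ilwTermDeriv A a z
      = (w ^ 2 - z ^ 2) * secantFactor A (a * z ^ 2) (a * w ^ 2) := by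
  have hz : A + a * z ^ 2 ≠ 0 := by positivity
  have hw : A + a * w ^ 2 ≠ 0 := by positivity
  unfold ilwTermDeriv secantFactor
  field_simp
  ring

end Term

section SecantFactor

variable {A u v : ℝ}

theorem le_secantFactor (hA : 0 < A) (hu : 0 ≤ u) (huA : u ≤ A) (hv : 0 ≤ v) (hvA : v ≤ A) :
    3 / (16 * A) ≤ secantFactor A u v := by
  have hnum : 3 * A ^ 3 ≤ A * (3 * A ^ 2 + A * (u + v) - u * v) := by
    nlinarith [mul_le_mul_of_nonneg_right huA hv, mul_nonneg hA.le hu]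
  have hden : (A + u) ^ 2 * (A + v) ^ 2 ≤ 16 * A ^ 4 := by
    have := mul_le_mul (pow_le_pow_left₀ (by positivity) (by linarith : A + u ≤ 2 * A) 2)
      (pow_le_pow_left₀ (by positivity) (by linarith : A + v ≤ 2 * A) 2) (by positivity)
      (by positivity)
    nlinarith
  unfold secantFactor
  rw [div_le_div_iff₀ (by positivity) (by positivity)]
  nlinarith [mul_le_mul_of_nonneg_left hden (by norm_num : (0:ℝ) ≤ 3),
    mul_le_mul_of_nonneg_left hnum (by positivity : (0:ℝ) ≤ 16 * A)]

theorem secantFactor_le (hA : 0 < A) (hu : 0 ≤ u) (huA : u ≤ A) (hv : 0 ≤ v) (hvA : v ≤ A) :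
    secantFactor A u v ≤ 5 / A := by
  have hnum : A * (3 * A ^ 2 + A * (u + v) - u * v) ≤ 5 * A ^ 3 := by
    nlinarith [mul_nonneg hu hv,
      mul_le_mul_of_nonneg_left (by linarith : u + v ≤ 2 * A) (sq_nonneg A)]
  have hden : A ^ 4 ≤ (A + u) ^ 2 * (A + v) ^ 2 := by
    have := mul_le_mul (pow_le_pow_left₀ hA.le (by linarith : A ≤ A + u) 2)
      (pow_le_pow_left₀ hA.le (by linarith : A ≤ A + v) 2) (by positivity) (by positivity)
    nlinarith
  unfold secantFactor
  rw [div_le_div_iff₀ (by positivity) hA]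
  nlinarith [mul_le_mul_of_nonneg_left hden (by norm_num : (0:ℝ) ≤ 5),
    mul_le_mul_of_nonneg_left hnum hA.le]

end SecantFactor

section Series

variable {A : ℕ → ℝ} {a : ℝ}

theorem summable_ilwTermDeriv (hA : ∀ k, 0 < A k) (hA_sum : Summable fun k => 1 / A k)
    (ha : 0 ≤ a) (y : ℝ) : Summable fun k => ilwTermDeriv (A k) a y :=
  .of_nonneg_of_le (fun k => ilwTermDeriv_nonneg (hA k) ha y)
    (fun k => (ilwTermDeriv_le (hA k) ha y).trans_eq (by ring)) (hA_sum.mul_left (3 * y ^ 2))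

theorem hasDerivAt_tsum_ilwTerm (hA : ∀ k, 0 < A k) (hA_sum : Summable fun k => 1 / A k)
    (ha : 0 ≤ a) (y : ℝ) :
    HasDerivAt (fun y => ∑' k, ilwTerm (A k) a y) (∑' k, ilwTermDeriv (A k) a y) y := by
  set R := |y| + 1
  have hy : y ∈ Metric.ball (0 : ℝ) R := by simp [R]
  refine hasDerivAt_tsum_of_isPreconnected (hA_sum.mul_left (3 * R ^ 2)) Metric.isOpen_ball
    (convex_ball 0 R).isPreconnected (fun k z _ => hasDerivAt_ilwTerm (hA k) ha z) ?_
    (Metric.mem_ball_self (by positivity)) (by simp [ilwTerm]) hy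
  intro k z hz
  have hzR : z ^ 2 ≤ R ^ 2 := by
    rw [mem_ball_zero_iff, Real.norm_eq_abs] at hz
    exact sq_le_sq' (by linarith [neg_abs_le z]) (le_of_abs_le hz.le)
  rw [Real.norm_of_nonneg (ilwTermDeriv_nonneg (hA k) ha z)]
  calc ilwTermDeriv (A k) a z ≤ 3 * z ^ 2 / A k := ilwTermDeriv_le (hA k) ha z
    _ ≤ 3 * R ^ 2 * (1 / A k) := by
      rw [mul_one_div]; gcongr; exact (hA k).le

end Series

noncomputable def ilwPole (k : ℕ) : ℝ := ((k : ℝ) + 1) ^ 2 * π ^ 2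

theorem pi_sq_le_ilwPole (k : ℕ) : π ^ 2 ≤ ilwPole k :=
  le_mul_of_one_le_left (by positivity) (one_le_pow₀ (by linarith [k.cast_nonneg (α := ℝ)]))

theorem ilwPole_pos (k : ℕ) : 0 < ilwPole k := by
  unfold ilwPole; positivity

theorem hasSum_one_div_ilwPole : HasSum (fun k => 1 / ilwPole k) (1 / 6) := by
  have hzeta : HasSum (fun k : ℕ => 1 / ((k : ℝ) + 1) ^ 2) (π ^ 2 / 6) := by
    simpa using (hasSum_nat_add_iff' 1).mpr hasSum_zeta_two
  have hpi : π ^ 2 / (6 * π ^ 2) = 1 / 6 := by field_simp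
  rw [← hpi]
  simpa only [ilwPole, div_div] using hzeta.div_const (π ^ 2)

theorem ptilde_eq_tsum (δ y : ℝ) : ptilde δ y = 6 * ∑' k, ilwTerm (ilwPole k) (δ ^ 2) y := by
  simp only [ptilde, Ldelta, ilwTerm, ilwPole, div_eq_mul_one_div (y ^ 3), tsum_mul_left]
  ring

theorem hasDerivAt_ptilde (δ y : ℝ) :
    HasDerivAt (ptilde δ) (6 * ∑' k, ilwTermDeriv (ilwPole k) (δ ^ 2) y) y := by
  rw [funext (ptilde_eq_tsum δ)]
  exact (hasDerivAt_tsum_ilwTerm ilwPole_pos hasSum_one_div_ilwPole.summable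
    (sq_nonneg δ) y).const_mul 6

theorem hasDerivAt_XiTilde (δ ξ ξ₁ : ℝ) :
    HasDerivAt (fun η => XiTilde δ ξ η (ξ - η))
      (6 * (ξ * (ξ - 2 * ξ₁)) *
        ∑' k, secantFactor (ilwPole k) (δ ^ 2 * ξ₁ ^ 2) (δ ^ 2 * (ξ - ξ₁) ^ 2)) ξ₁ := by
  have hsum := summable_ilwTermDeriv ilwPole_pos hasSum_one_div_ilwPole.summable (sq_nonneg δ)
  have hdiff : ∑' k, ilwTermDeriv (ilwPole k) (δ ^ 2) (ξ - ξ₁)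
      - ∑' k, ilwTermDeriv (ilwPole k) (δ ^ 2) ξ₁
      = ξ * (ξ - 2 * ξ₁) *
        ∑' k, secantFactor (ilwPole k) (δ ^ 2 * ξ₁ ^ 2) (δ ^ 2 * (ξ - ξ₁) ^ 2) := by
    rw [← (hsum _).tsum_sub (hsum _), ← tsum_mul_left]
    refine tsum_congr fun k => ?_
    rw [ilwTermDeriv_sub (ilwPole_pos k) (sq_nonneg δ)]
    ring
  have hcomp := (hasDerivAt_ptilde δ (ξ - ξ₁)).comp ξ₁ ((hasDerivAt_id ξ₁).const_sub ξ)
  refine (((hasDerivAt_const ξ₁ (ptilde δ ξ)).sub (hasDerivAt_ptilde δ ξ₁)).sub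
    hcomp).congr_deriv ?_
  linear_combination 6 * hdiff

theorem sq_mul_sq_le_one {δ z : ℝ} (hδ : 0 < δ) (hz : |z| ≤ δ⁻¹) : δ ^ 2 * z ^ 2 ≤ 1 := by
  rw [← mul_pow, sq_le_one_iff_abs_le_one, abs_mul, abs_of_pos hδ]
  calc δ * |z| ≤ δ * δ⁻¹ := by gcongr
    _ = 1 := mul_inv_cancel₀ hδ.ne'

section SecantFactorSeries

variable {u v : ℝ}

theorem le_secantFactor_ilwPole (hu : u ∈ Set.Icc 0 (π ^ 2)) (hv : v ∈ Set.Icc 0 (π ^ 2))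
    (k : ℕ) : 3 / (16 * ilwPole k) ≤ secantFactor (ilwPole k) u v :=
  le_secantFactor (ilwPole_pos k) hu.1 (hu.2.trans (pi_sq_le_ilwPole k)) hv.1
    (hv.2.trans (pi_sq_le_ilwPole k))

theorem secantFactor_ilwPole_le (hu : u ∈ Set.Icc 0 (π ^ 2)) (hv : v ∈ Set.Icc 0 (π ^ 2))
    (k : ℕ) : secantFactor (ilwPole k) u v ≤ 5 * (1 / ilwPole k) :=
  (secantFactor_le (ilwPole_pos k) hu.1 (hu.2.trans (pi_sq_le_ilwPole k)) hv.1
    (hv.2.trans (pi_sq_le_ilwPole k))).trans_eq (mul_one_div _ _).symm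

theorem secantFactor_ilwPole_nonneg (hu : u ∈ Set.Icc 0 (π ^ 2)) (hv : v ∈ Set.Icc 0 (π ^ 2))
    (k : ℕ) : 0 ≤ secantFactor (ilwPole k) u v :=
  (div_nonneg (by norm_num) (mul_pos (by norm_num) (ilwPole_pos k)).le).trans
    (le_secantFactor_ilwPole hu hv k)

theorem summable_secantFactor_ilwPole (hu : u ∈ Set.Icc 0 (π ^ 2))
    (hv : v ∈ Set.Icc 0 (π ^ 2)) : Summable fun k => secantFactor (ilwPole k) u v :=
  .of_nonneg_of_le (secantFactor_ilwPole_nonneg hu hv) (secantFactor_ilwPole_le hu hv)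
    (hasSum_one_div_ilwPole.summable.mul_left 5)

theorem tsum_secantFactor_ilwPole_le (hu : u ∈ Set.Icc 0 (π ^ 2))
    (hv : v ∈ Set.Icc 0 (π ^ 2)) : ∑' k, secantFactor (ilwPole k) u v ≤ 5 / 6 := by
  have h := (hasSum_one_div_ilwPole.mul_left 5).tsum_eq
  linarith [(summable_secantFactor_ilwPole hu hv).tsum_le_tsum (secantFactor_ilwPole_le hu hv)
    (hasSum_one_div_ilwPole.summable.mul_left 5)]

theorem le_tsum_secantFactor_ilwPole (hu : u ∈ Set.Icc 0 (π ^ 2))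
    (hv : v ∈ Set.Icc 0 (π ^ 2)) : 3 / (16 * π ^ 2) ≤ ∑' k, secantFactor (ilwPole k) u v := by
  have h0 : ilwPole 0 = π ^ 2 := by simp [ilwPole]
  calc 3 / (16 * π ^ 2) ≤ secantFactor (ilwPole 0) u v := h0 ▸ le_secantFactor_ilwPole hu hv 0
    _ ≤ ∑' k, secantFactor (ilwPole k) u v :=
      (summable_secantFactor_ilwPole hu hv).le_tsum 0 fun k _ => secantFactor_ilwPole_nonneg hu hv k

end SecantFactorSeries

/-- The derivative of `η ↦ Ξ̃_δ(ξ, η, ξ − η)` at `η = ξ₁` has the same sign as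
`ξ(ξ − 2ξ₁)` and magnitude comparable to `|ξ(ξ − 2ξ₁)|`, uniformly in
`δ ∈ (0,1]`, on frequencies `|ξ|, |ξ₁|, |ξ − ξ₁| ≤ δ⁻¹`. -/
theorem XiTilde_deriv_comparable :
    ∃ c > 0, ∃ C > 0, ∀ δ ∈ Set.Ioc (0 : ℝ) 1, ∀ ξ ξ₁ : ℝ,
      |ξ| ≤ δ⁻¹ → |ξ₁| ≤ δ⁻¹ → |ξ - ξ₁| ≤ δ⁻¹ →
      ∃ d : ℝ, HasDerivAt (fun η : ℝ => XiTilde δ ξ η (ξ - η)) d ξ₁ ∧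
        c * (ξ * (ξ - 2 * ξ₁)) ^ 2 ≤ d * (ξ * (ξ - 2 * ξ₁)) ∧
        |d| ≤ C * |ξ * (ξ - 2 * ξ₁)| := by
  refine ⟨6 * (3 / (16 * π ^ 2)), by positivity, 5, by norm_num, ?_⟩
  rintro δ ⟨hδ, -⟩ ξ ξ₁ - hξ₁ hξξ₁
  have hπ : 1 ≤ π ^ 2 := one_le_pow₀ (by linarith [pi_gt_three])
  have hu : δ ^ 2 * ξ₁ ^ 2 ∈ Set.Icc 0 (π ^ 2) :=
    ⟨by positivity, (sq_mul_sq_le_one hδ hξ₁).trans hπ⟩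
  have hv : δ ^ 2 * (ξ - ξ₁) ^ 2 ∈ Set.Icc 0 (π ^ 2) :=
    ⟨by positivity, (sq_mul_sq_le_one hδ hξξ₁).trans hπ⟩
  set S := ∑' k, secantFactor (ilwPole k) (δ ^ 2 * ξ₁ ^ 2) (δ ^ 2 * (ξ - ξ₁) ^ 2)
  have hS_ge : 3 / (16 * π ^ 2) ≤ S := le_tsum_secantFactor_ilwPole hu hv
  have hS_le : S ≤ 5 / 6 := tsum_secantFactor_ilwPole_le hu hv
  have hS_nonneg : 0 ≤ S := (by positivity : (0 : ℝ) ≤ 3 / (16 * π ^ 2)).trans hS_ge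
  set s := ξ * (ξ - 2 * ξ₁)
  refine ⟨6 * s * S, hasDerivAt_XiTilde δ ξ ξ₁, ?_, ?_⟩
  · nlinarith [mul_le_mul_of_nonneg_left hS_ge (sq_nonneg s)]
  · calc |6 * s * S| = 6 * S * |s| := by
          rw [abs_mul, abs_mul, abs_of_nonneg hS_nonneg, abs_of_pos (by norm_num : (0 : ℝ) < 6)]
          ring
      _ ≤ 6 * (5 / 6) * |s| := by gcongr
      _ = 5 * |s| := by ring
end

section
/- Let θ ∈ (0, 2/5]. Then for every δ ∈ (0, 1] and all ξ, ξ₁, ξ₂ ∈ ℝ with |ξ| ≤ δ^{−2/5+θ}, |ξ₁| ≤ δ^{−2/5+θ}, and |ξ₂| ≤ δ^{−2/5+θ}, one has |Ξ_KdV(ξ, ξ₁, ξ₂) − Ξ̃_δ(ξ, ξ₁, ξ₂)| ≤ 3δ^{5θ}, where Ξ_KdV(ξ, ξ₁, ξ₂) := ξ³ − ξ₁³ − ξ₂³. -/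
/-! Since `∑ 1/(k²π²) = 1/6`, we have `ξ³ - p̃_δ(ξ) = 6ξ³ ∑ δ²ξ² / (k²π² (k²π² + δ²ξ²))`, and
the sum lies between `0` and `δ²ξ² ∑ 1/(k⁴π⁴) = δ²ξ²/90`. Hence `|ξ³ - p̃_δ(ξ)| ≤ δ²|ξ|⁵/15`,
which is at most `δ^{5θ}` when `|ξ| ≤ δ^{-2/5+θ}`; the two resonance functions differ by three
such terms. -/

open Real

/-- The KdV resonance function `Ξ_KdV(ξ, ξ₁, ξ₂) = ξ³ − ξ₁³ − ξ₂³`. -/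
noncomputable def XiKdV (ξ ξ₁ ξ₂ : ℝ) : ℝ := ξ ^ 3 - ξ₁ ^ 3 - ξ₂ ^ 3

lemma hasSum_one_div_succ_pow {k : ℕ} (hk : k ≠ 0) {s : ℝ}
    (h : HasSum (fun n : ℕ => 1 / (n : ℝ) ^ k) s) :
    HasSum (fun n : ℕ => 1 / ((n : ℝ) + 1) ^ k) s := by
  simpa [zero_pow hk] using (hasSum_nat_add_iff' 1).mpr h

lemma hasSum_one_div_succ_sq_mul_pi_sq_sq :
    HasSum (fun k : ℕ => 1 / (((k : ℝ) + 1) ^ 2 * π ^ 2) ^ 2) (1 / 90) := by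
  have h := (hasSum_one_div_succ_pow four_ne_zero hasSum_zeta_four).div_const (π ^ 4)
  rw [show π ^ 4 / 90 / π ^ 4 = 1 / 90 by field_simp] at h
  simpa only [div_div, mul_pow, ← pow_mul] using h

lemma sub_tsum_one_div_add_mem_Icc {A : ℕ → ℝ} (hA : ∀ k, 0 < A k) {s t a : ℝ}
    (hs : HasSum (fun k => 1 / A k) s) (ht : HasSum (fun k => 1 / A k ^ 2) t) (ha : 0 ≤ a) :
    s - ∑' k, 1 / (A k + a) ∈ Set.Icc 0 (a * t) := by
  have hAa : ∀ k, 0 < A k + a := fun k => add_pos_of_pos_of_nonneg (hA k) ha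
  have hle : ∀ k, 1 / (A k + a) ≤ 1 / A k := fun k =>
    one_div_le_one_div_of_le (hA k) (le_add_of_nonneg_right ha)
  have hdiff : HasSum (fun k => 1 / A k - 1 / (A k + a)) (s - ∑' k, 1 / (A k + a)) :=
    hs.sub (hs.summable.of_nonneg_of_le (fun k => (one_div_pos.2 (hAa k)).le) hle).hasSum
  refine ⟨hasSum_le (fun k => sub_nonneg.2 (hle k)) hasSum_zero hdiff,
    hasSum_le (fun k => ?_) hdiff (ht.mul_left a)⟩
  have hk : 1 / A k - 1 / (A k + a) = a / (A k * (A k + a)) := by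
    field_simp [(hA k).ne', (hAa k).ne']
    ring
  rw [hk, mul_one_div]
  exact div_le_div_of_nonneg_left ha (pow_pos (hA k) 2) (by nlinarith [mul_nonneg (hA k).le ha])

lemma cube_sub_ptilde (δ ξ : ℝ) :
    ξ ^ 3 - ptilde δ ξ =
      6 * ξ ^ 3 * (1 / 6 - ∑' k : ℕ, 1 / (((k : ℝ) + 1) ^ 2 * π ^ 2 + δ ^ 2 * ξ ^ 2)) := by
  simp only [ptilde, Ldelta]
  ring

lemma abs_cube_sub_ptilde_le (δ ξ : ℝ) : |ξ ^ 3 - ptilde δ ξ| ≤ δ ^ 2 * |ξ| ^ 5 / 15 := by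
  obtain ⟨h0, h90⟩ := sub_tsum_one_div_add_mem_Icc (fun k => by positivity)
    hasSum_one_div_succ_sq_mul_pi_sq hasSum_one_div_succ_sq_mul_pi_sq_sq
    (by positivity : 0 ≤ δ ^ 2 * ξ ^ 2)
  rw [cube_sub_ptilde, abs_mul, abs_of_nonneg h0, abs_mul, abs_pow,
    abs_of_pos (by norm_num : (0 : ℝ) < 6)]
  calc 6 * |ξ| ^ 3 * (1 / 6 - _) ≤ 6 * |ξ| ^ 3 * (δ ^ 2 * ξ ^ 2 * (1 / 90)) := by gcongr
    _ = δ ^ 2 * |ξ| ^ 5 / 15 := by rw [← sq_abs ξ]; ring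

lemma sq_mul_pow_five_le_rpow {δ x r : ℝ} (hδ : 0 < δ) (hx : |x| ≤ δ ^ r) :
    δ ^ 2 * |x| ^ 5 ≤ δ ^ (2 + 5 * r) := by
  rw [rpow_add hδ, mul_comm 5 r, rpow_mul hδ.le, rpow_two, rpow_ofNat]
  gcongr

theorem XiKdV_sub_XiTilde_bound_general (θ : ℝ)
    (δ : ℝ) (hδ : δ ∈ Set.Ioc (0 : ℝ) 1) (ξ ξ₁ ξ₂ : ℝ)
    (h : |ξ| ≤ δ ^ (-(2 : ℝ) / 5 + θ)) (h₁ : |ξ₁| ≤ δ ^ (-(2 : ℝ) / 5 + θ))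
    (h₂ : |ξ₂| ≤ δ ^ (-(2 : ℝ) / 5 + θ)) :
    |XiKdV ξ ξ₁ ξ₂ - XiTilde δ ξ ξ₁ ξ₂| ≤ 3 * δ ^ (5 * θ) := by
  have hexp : 2 + 5 * (-(2 : ℝ) / 5 + θ) = 5 * θ := by ring
  have bound : ∀ x, |x| ≤ δ ^ (-(2 : ℝ) / 5 + θ) → |x ^ 3 - ptilde δ x| ≤ δ ^ (5 * θ) :=
    fun x hx => by
      have := sq_mul_pow_five_le_rpow hδ.1 hx
      rw [hexp] at this
      linarith [abs_cube_sub_ptilde_le δ x,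
        mul_nonneg (sq_nonneg δ) (pow_nonneg (abs_nonneg x) 5)]
  have split : XiKdV ξ ξ₁ ξ₂ - XiTilde δ ξ ξ₁ ξ₂ =
      (ξ ^ 3 - ptilde δ ξ) - (ξ₁ ^ 3 - ptilde δ ξ₁) - (ξ₂ ^ 3 - ptilde δ ξ₂) := by
    simp only [XiKdV, XiTilde]; ring
  rw [split]
  calc _ ≤ |ξ ^ 3 - ptilde δ ξ| + |ξ₁ ^ 3 - ptilde δ ξ₁| + |ξ₂ ^ 3 - ptilde δ ξ₂| :=
        (abs_sub _ _).trans (by gcongr; exact abs_sub _ _)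
    _ ≤ 3 * δ ^ (5 * θ) := by linarith [bound ξ h, bound ξ₁ h₁, bound ξ₂ h₂]

/-- On frequencies of size at most `δ^{−2/5+θ}`, the scaled ILW resonance
function is within `3δ^{5θ}` of the KdV resonance function. -/
theorem XiKdV_sub_XiTilde_bound (θ : ℝ) (hθ : θ ∈ Set.Ioc (0 : ℝ) (2 / 5))
    (δ : ℝ) (hδ : δ ∈ Set.Ioc (0 : ℝ) 1) (ξ ξ₁ ξ₂ : ℝ)
    (h : |ξ| ≤ δ ^ (-(2 : ℝ) / 5 + θ)) (h₁ : |ξ₁| ≤ δ ^ (-(2 : ℝ) / 5 + θ))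
    (h₂ : |ξ₂| ≤ δ ^ (-(2 : ℝ) / 5 + θ)) :
    |XiKdV ξ ξ₁ ξ₂ - XiTilde δ ξ ξ₁ ξ₂| ≤ 3 * δ ^ (5 * θ) :=
  XiKdV_sub_XiTilde_bound_general θ δ hδ ξ ξ₁ ξ₂ h h₁ h₂
end
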